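/- Let d ≥ 2 and let f be a homeomorphism of ℝ^d supported† on a compact set K ⊂ ℝ^d, and let x₀ be a non-wandering point of f. Then for every ε > 0 and every compact set P with K ⊂ int(P) there exists a homeomorphism g of ℝ^d, supported† on P, such that x₀ is a periodic point of g and sup_{x∈ℝ^d} ‖f(x) − g(x)‖ < ε. Moreover, if f is orientation-preserving then g can be chosen orientation-preserving. -/

import Mathlib

open Metric Set Function Filter Topology

noncomputable section

/-- `f` equals the identity outside `S` (supported† on `S`). -/
def SuppDaggerOn {E : Type*} (f : E → E) (S : Set E) : Prop := ∀ x, x ∉ S → f x = x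

/-- `V` vanishes outside `S`. -/
def ZeroOutside {E F : Type*} [Zero F] (V : E → F) (S : Set E) : Prop := ∀ x, x ∉ S → V x = 0

/-- `φ` is the time-1 solution map of the autonomous ODE `ẋ_t = V (x_t)`:
for every initial condition `x` there is a solution curve starting at `x`
whose time-1 value is `φ x`. -/
def IsTime1Flow {E : Type*} [NormedAddCommGroup E] [NormedSpace ℝ E]
    (V : E → E) (φ : E → E) : Prop :=
  ∀ x : E, ∃ γ : ℝ → E, γ 0 = x ∧ (∀ t : ℝ, HasDerivAt γ (V (γ t)) t) ∧ γ 1 = φ x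

/-- `compFlows ψ T = ψ (T-1) ∘ ⋯ ∘ ψ 0`. -/
def compFlows {E : Type*} (ψ : ℕ → E → E) : ℕ → E → E
  | 0 => id
  | T + 1 => ψ T ∘ compFlows ψ T

/-- Orientation preserving: homotopic to the identity. -/
def HomotopicToId {E : Type*} [TopologicalSpace E] (φ : E → E) : Prop :=
  ∃ f : C(E, E), ⇑f = φ ∧ f.Homotopic (ContinuousMap.id E)

/-- The closed unit cube `[0,1]^d`. -/
def cube01 (d : ℕ) : Set (Fin d → ℝ) := Set.univ.pi fun _ => Set.Icc (0:ℝ) 1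

/-- The open unit cube `(0,1)^d`. -/
def cube01open (d : ℕ) : Set (Fin d → ℝ) := Set.univ.pi fun _ => Set.Ioo (0:ℝ) 1

/-- The ReLU activation. -/
def relu (x : ℝ) : ℝ := max x 0

open scoped Classical in
/-- Number of nonzero entries of a matrix. -/
noncomputable def nnzM {m n : ℕ} (W : Matrix (Fin m) (Fin n) ℝ) : ℕ :=
  (Finset.univ.filter fun p : Fin m × Fin n => W p.1 p.2 ≠ 0).card

open scoped Classical in
/-- Number of nonzero entries of a vector. -/
noncomputable def nnzV {m : ℕ} (b : Fin m → ℝ) : ℕ :=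
  (Finset.univ.filter fun i : Fin m => b i ≠ 0).card

/-- `MLPRep σ depth width params n m f`: the map `f : ℝ^n → ℝ^m` is a σ-MLP with `depth`
affine layers, all hidden layers of dimension at most `width`, and `params` nonzero
parameters, i.e. `f = L_depth ∘ (σ ∘ L_{depth-1}) ∘ ⋯ ∘ (σ ∘ L_1)` for affine maps `L_l`. -/
inductive MLPRep (σ : ℝ → ℝ) :
    (depth width params n m : ℕ) → ((Fin n → ℝ) → (Fin m → ℝ)) → Prop
  | affine {n m : ℕ} (W : Matrix (Fin m) (Fin n) ℝ) (b : Fin m → ℝ) :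
      MLPRep σ 1 0 (nnzM W + nnzV b) n m (fun x => W.mulVec x + b)
  | layer {n k m depth width params : ℕ}
      (W : Matrix (Fin k) (Fin n) ℝ) (b : Fin k → ℝ)
      {f : (Fin k → ℝ) → (Fin m → ℝ)}
      (hf : MLPRep σ depth width params k m f) :
      MLPRep σ (depth + 1) (max k width) (params + (nnzM W + nnzV b)) n m
        (fun x => f (fun i => σ ((W.mulVec x + b) i)))

/-- `f` is a σ-MLP (of some depth, width and parameter count). -/
def IsMLP (σ : ℝ → ℝ) {n m : ℕ} (f : (Fin n → ℝ) → (Fin m → ℝ)) : Prop :=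
  ∃ depth width params, MLPRep σ depth width params n m f

abbrev Euc (d : ℕ) := EuclideanSpace ℝ (Fin d)

/-! Choose a small ball `U` around `x₀` on which `f` varies little. Since `x₀` is non-wandering,
some `z ∈ U` comes back to `U`; at its first return time `n + 1` the points `f^[j] z`,
`0 < j ≤ n`, lie outside `U`. Homeomorphisms supported in a connected open set act transitively
on it (near a point, `x ↦ x + bump x • v` is a Lipschitz-small perturbation of the identity, hence
a homeomorphism), so there are `h₁`, `h₂` supported in `U` with `h₁ x₀ = z` and
`h₂ (f^[n+1] z) = x₀`. The map `g = h₂ ∘ f ∘ h₁` agrees with `f` along the orbit segment, so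
`g^[n+1] x₀ = x₀`, and it is `C⁰`-close to `f` because it differs from `f` only through `U`.
Every continuous self-map of `ℝ^d` is homotopic to the identity by the straight-line homotopy. -/

namespace SuppDaggerOn

variable {α : Type*} {f g : α → α} {s t : Set α}

lemma mono (hf : SuppDaggerOn f s) (hst : s ⊆ t) : SuppDaggerOn f t :=
  fun x hx => hf x (fun hs => hx (hst hs))

lemma comp (hf : SuppDaggerOn f s) (hg : SuppDaggerOn g s) : SuppDaggerOn (f ∘ g) s :=
  fun x hx => by rw [comp_apply, hg x hx, hf x hx]

lemma symm {e : α ≃ α} (he : SuppDaggerOn e s) : SuppDaggerOn e.symm s :=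
  fun x hx => by rw [Equiv.symm_apply_eq, he x hx]

lemma mapsTo (hf : SuppDaggerOn f s) (hinj : Injective f) : MapsTo f s s := by
  intro x hx
  by_contra hfx
  exact hfx ((hinj (hf (f x) hfx)).symm ▸ hx)

lemma eq_or_mem (hf : SuppDaggerOn f s) (hinj : Injective f) (x : α) :
    f x = x ∨ x ∈ s ∧ f x ∈ s := by
  by_cases hx : x ∈ s
  · exact Or.inr ⟨hx, hf.mapsTo hinj hx⟩
  · exact Or.inl (hf x hx)

end SuppDaggerOn

lemma homotopicToId_of_continuous {E : Type*} [TopologicalSpace E] [AddCommGroup E]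
    [Module ℝ E] [IsTopologicalAddGroup E] [ContinuousSMul ℝ E] {φ : E → E}
    (hφ : Continuous φ) : HomotopicToId φ :=
  ⟨⟨φ, hφ⟩, rfl, ⟨⟨⟨fun p => (1 - (p.1 : ℝ)) • φ p.2 + (p.1 : ℝ) • p.2, by fun_prop⟩,
    fun x => by simp, fun x => by simp⟩⟩⟩

section Homeomorphisms

variable {E : Type*} [NormedAddCommGroup E] [NormedSpace ℝ E] [CompleteSpace E]

lemma exists_homeomorph_eq_add_of_lipschitzWith {u : E → E} {K : NNReal}
    (hu : LipschitzWith K u) (hK : K < 1) : ∃ ψ : E ≃ₜ E, ∀ x, ψ x = x + u x := by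
  have hA : ApproximatesLinearOn (fun x => x + u x)
      ((ContinuousLinearEquiv.refl ℝ E : E ≃L[ℝ] E) : E →L[ℝ] E) univ K := by
    rw [ApproximatesLinearOn.approximatesLinearOn_iff_lipschitzOnWith]
    convert hu.lipschitzOnWith (s := univ) using 1
    ext x
    simp
  have hc : Subsingleton E ∨ K < ‖(((ContinuousLinearEquiv.refl ℝ E).symm : E ≃L[ℝ] E) :
      E →L[ℝ] E)‖₊⁻¹ := by
    rcases subsingleton_or_nontrivial E with h | h
    · exact Or.inl h
    · right
      simpa using hK
  exact ⟨hA.toHomeomorph _ hc, fun x => rfl⟩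

lemma exists_suppDaggerOn_ball_apply_center (c : E) {r : ℝ} {v : E} (hv : ‖v‖ < r) :
    ∃ ψ : E ≃ₜ E, SuppDaggerOn ψ (ball c r) ∧ ψ c = c + v := by
  have hr : 0 < r := (norm_nonneg v).trans_lt hv
  set bump : E → ℝ := fun x => max (1 - dist x c / r) 0
  have hbump : ∀ x y, |bump x - bump y| ≤ dist x y / r := fun x y => by
    refine (abs_max_sub_max_le_abs _ _ _).trans ?_
    rw [show 1 - dist x c / r - (1 - dist y c / r) = (dist y c - dist x c) / r by ring,
      abs_div, abs_of_pos hr, abs_sub_comm]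
    gcongr
    exact abs_dist_sub_le x y c
  have hlip : LipschitzWith (‖v‖ / r).toNNReal fun x => bump x • v := by
    refine LipschitzWith.of_dist_le' fun x y => ?_
    rw [dist_eq_norm, ← sub_smul, norm_smul, Real.norm_eq_abs]
    calc |bump x - bump y| * ‖v‖ ≤ dist x y / r * ‖v‖ := by gcongr; exact hbump x y
      _ = ‖v‖ / r * dist x y := by ring
  obtain ⟨ψ, hψ⟩ := exists_homeomorph_eq_add_of_lipschitzWith hlip
    (Real.toNNReal_lt_one.mpr ((div_lt_one hr).mpr hv))
  refine ⟨ψ, fun x hx => ?_, by simp [hψ, bump]⟩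
  have : 1 ≤ dist x c / r := (le_div_iff₀ hr).mpr (by simpa using hx)
  simp [hψ, bump, this]

lemma IsOpen.exists_suppDaggerOn_apply_eq {U : Set E} (hU : IsOpen U) (hconn : IsPreconnected U)
    {a b : E} (ha : a ∈ U) (hb : b ∈ U) : ∃ Φ : E ≃ₜ E, SuppDaggerOn Φ U ∧ Φ a = b := by
  refine hconn.induction₂ (fun a b => ∃ Φ : E ≃ₜ E, SuppDaggerOn Φ U ∧ Φ a = b) ?_ ?_ ?_ ha hb
  · intro y hy
    obtain ⟨r, hr, hsub⟩ := Metric.isOpen_iff.mp hU y hy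
    filter_upwards [nhdsWithin_le_nhds (ball_mem_nhds y hr)] with y' hy'
    obtain ⟨ψ, hψ, hψy⟩ := exists_suppDaggerOn_ball_apply_center y (v := y' - y)
      (by rwa [← dist_eq_norm, ← mem_ball])
    exact ⟨ψ, hψ.mono hsub, by rw [hψy, add_sub_cancel]⟩
  · rintro x y z - - - ⟨Φ, hΦ, rfl⟩ ⟨Ψ, hΨ, rfl⟩
    exact ⟨Φ.trans Ψ, hΨ.comp hΦ, rfl⟩
  · rintro x y - - ⟨Φ, hΦ, rfl⟩
    exact ⟨Φ.symm, hΦ.symm (e := Φ.toEquiv), Φ.symm_apply_apply x⟩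

end Homeomorphisms

section Closing

variable {α : Type*} {f h₁ h₂ : α → α} {U : Set α}

lemma exists_first_return (h : ∃ n, ∃ z ∈ U, f^[n + 1] z ∈ U) :
    ∃ n, ∃ z ∈ U, f^[n + 1] z ∈ U ∧ ∀ j, 0 < j → j ≤ n → f^[j] z ∉ U := by
  classical
  obtain ⟨z, hzU, hret⟩ := Nat.find_spec h
  refine ⟨Nat.find h, z, hzU, hret, fun j hj hjn hjU => ?_⟩
  obtain ⟨i, rfl⟩ := Nat.exists_eq_succ_of_ne_zero hj.ne'
  exact Nat.find_min h (Nat.lt_of_succ_le hjn) ⟨z, hzU, hjU⟩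

lemma iterate_comp_comp_apply_eq_self {x₀ z : α} {n : ℕ} (h₁U : SuppDaggerOn h₁ U)
    (h₂U : SuppDaggerOn h₂ U) (hz : h₁ x₀ = z) (hret : h₂ (f^[n + 1] z) = x₀)
    (hout : ∀ j, 0 < j → j ≤ n → f^[j] z ∉ U) : (h₂ ∘ f ∘ h₁)^[n + 1] x₀ = x₀ := by
  have key : ∀ j ≤ n, f (h₁ ((h₂ ∘ f ∘ h₁)^[j] x₀)) = f^[j + 1] z := by
    intro j hj
    induction j with
    | zero => simp [hz]
    | succ j ih =>
      have hj' := hout (j + 1) j.succ_pos hj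
      rw [iterate_succ_apply', comp_apply, comp_apply, ih (by omega), h₂U _ hj', h₁U _ hj',
        ← iterate_succ_apply' f]
  rw [iterate_succ_apply', comp_apply, comp_apply, key n le_rfl, hret]

end Closing

section Estimates

variable {X : Type*} [PseudoMetricSpace X] {c : X} {ρ : ℝ} {h : X → X}

lemma SuppDaggerOn.dist_apply_self_lt (hh : SuppDaggerOn h (ball c ρ)) (hinj : Injective h)
    (hρ : 0 < ρ) (x : X) : dist (h x) x < 2 * ρ := by
  rcases hh.eq_or_mem hinj x with hx | ⟨hx, hhx⟩
  · rw [hx, dist_self]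
    positivity
  · calc dist (h x) x ≤ dist (h x) c + dist x c := dist_triangle_right _ _ _
      _ < 2 * ρ := by rw [mem_ball] at hx hhx; linarith

lemma dist_comp_comp_lt {f h₁ h₂ : X → X} {δ : ℝ} (hρ : 0 < ρ)
    (hf : ∀ y ∈ ball c ρ, dist (f y) (f c) < δ)
    (h₁U : SuppDaggerOn h₁ (ball c ρ)) (h₁inj : Injective h₁)
    (h₂U : SuppDaggerOn h₂ (ball c ρ)) (h₂inj : Injective h₂) (x : X) :
    dist (f x) (h₂ (f (h₁ x))) < 2 * δ + 2 * ρ := by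
  have hδ : 0 < δ := dist_nonneg.trans_lt (hf c (mem_ball_self hρ))
  have hf₁ : dist (f x) (f (h₁ x)) < 2 * δ := by
    rcases h₁U.eq_or_mem h₁inj x with hx | ⟨hx, hx'⟩
    · rw [hx, dist_self]
      positivity
    · calc dist (f x) (f (h₁ x)) ≤ dist (f x) (f c) + dist (f (h₁ x)) (f c) :=
            dist_triangle_right _ _ _
        _ < 2 * δ := by linarith [hf x hx, hf _ hx']
  calc dist (f x) (h₂ (f (h₁ x)))
      ≤ dist (f x) (f (h₁ x)) + dist (h₂ (f (h₁ x))) (f (h₁ x)) := dist_triangle_right _ _ _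
    _ < 2 * δ + 2 * ρ := add_lt_add hf₁ (h₂U.dist_apply_self_lt h₂inj hρ _)

end Estimates

theorem c0_closing_lemma_general (d : ℕ)
    (K : Set (Euc d))
    (f : Homeomorph (Euc d) (Euc d)) (hsupp : SuppDaggerOn ⇑f K)
    (x₀ : Euc d)
    (hnw : ∀ U : Set (Euc d), IsOpen U → x₀ ∈ U →
      ∃ n : ℕ, 1 ≤ n ∧ ((⇑f)^[n] '' U ∩ U).Nonempty) :
    ∀ ε : ℝ, 0 < ε → ∀ P : Set (Euc d), IsCompact P → K ⊆ interior P →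
      ∃ g : Homeomorph (Euc d) (Euc d),
        SuppDaggerOn ⇑g P ∧
        (∃ k : ℕ, 1 ≤ k ∧ (⇑g)^[k] x₀ = x₀) ∧
        (⨆ x : Euc d, ‖f x - g x‖) < ε ∧
        (HomotopicToId ⇑f → HomotopicToId ⇑g) := by
  intro ε hε P _ hKP
  have hfP : SuppDaggerOn f P := hsupp.mono (hKP.trans interior_subset)
  by_cases hx₀ : x₀ ∈ K
  swap
  · exact ⟨f, hfP, ⟨1, le_rfl, hsupp x₀ hx₀⟩, by simpa using hε, id⟩
  obtain ⟨ρ, hρ, hρP, hρf, hρε⟩ : ∃ ρ > 0, ball x₀ ρ ⊆ P ∧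
      (∀ y ∈ ball x₀ ρ, dist (f y) (f x₀) < ε / 4) ∧ ρ ≤ ε / 8 := by
    obtain ⟨ρ₁, hρ₁, hP₁⟩ := Metric.isOpen_iff.mp isOpen_interior x₀ (hKP hx₀)
    obtain ⟨ρ₂, hρ₂, hf₂⟩ :=
      Metric.continuousAt_iff.mp f.continuous.continuousAt (ε / 4) (by positivity)
    refine ⟨min (min ρ₁ ρ₂) (ε / 8), by positivity, fun y hy => ?_, fun y hy => ?_,
      min_le_right _ _⟩
    · exact interior_subset (hP₁ (ball_subset_ball (by simp) hy))
    · exact hf₂ (mem_ball.mp (ball_subset_ball (by simp) hy))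
  have hx₀U : x₀ ∈ ball x₀ ρ := mem_ball_self hρ
  obtain ⟨n, z, hzU, hretU, hout⟩ := exists_first_return (f := f) (U := ball x₀ ρ) (by
    obtain ⟨n, hn, -, ⟨z, hz, rfl⟩, hy⟩ := hnw (ball x₀ ρ) isOpen_ball hx₀U
    obtain ⟨k, rfl⟩ := Nat.exists_eq_add_of_le' hn
    exact ⟨k, z, hz, hy⟩)
  have hUconn := (convex_ball x₀ ρ).isPreconnected
  obtain ⟨h₁, h₁U, h₁x₀⟩ := isOpen_ball.exists_suppDaggerOn_apply_eq hUconn hx₀U hzU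
  obtain ⟨h₂, h₂U, h₂ret⟩ := isOpen_ball.exists_suppDaggerOn_apply_eq hUconn hretU hx₀U
  have hg : ⇑((h₁.trans f).trans h₂) = h₂ ∘ f ∘ h₁ := rfl
  refine ⟨(h₁.trans f).trans h₂, hg ▸ (h₂U.mono hρP).comp (hfP.comp (h₁U.mono hρP)),
    ⟨n + 1, n.succ_pos, hg ▸ iterate_comp_comp_apply_eq_self h₁U h₂U h₁x₀ h₂ret hout⟩, ?_,
    fun _ => homotopicToId_of_continuous (Homeomorph.continuous _)⟩
  refine (Real.iSup_le (fun x => ?_) (by positivity)).trans_lt (show 3 * ε / 4 < ε by linarith)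
  rw [← dist_eq_norm, hg]
  exact (dist_comp_comp_lt hρ hρf h₁U h₁.injective h₂U h₂.injective x).le.trans (by linarith)

/-- **Statement 13.** `C⁰`-closing lemma for compactly supported homeomorphisms: if `f` is a
homeomorphism of `ℝ^d` (`d ≥ 2`) supported† on the compact set `K` and `x₀` is non-wandering,
then for every `ε > 0` and every compact `P` with `K ⊆ int P` there is a homeomorphism `g`
supported† on `P` with `x₀` periodic for `g` and `sup_x ‖f x − g x‖ < ε`; if `f` is
orientation-preserving then `g` may be chosen orientation-preserving. -/
theorem c0_closing_lemma (d : ℕ) (hd : 2 ≤ d)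
    (K : Set (Euc d)) (hK : IsCompact K)
    (f : Homeomorph (Euc d) (Euc d)) (hsupp : SuppDaggerOn ⇑f K)
    (x₀ : Euc d)
    (hnw : ∀ U : Set (Euc d), IsOpen U → x₀ ∈ U →
      ∃ n : ℕ, 1 ≤ n ∧ ((⇑f)^[n] '' U ∩ U).Nonempty) :
    ∀ ε : ℝ, 0 < ε → ∀ P : Set (Euc d), IsCompact P → K ⊆ interior P →
      ∃ g : Homeomorph (Euc d) (Euc d),
        SuppDaggerOn ⇑g P ∧
        (∃ k : ℕ, 1 ≤ k ∧ (⇑g)^[k] x₀ = x₀) ∧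
        (⨆ x : Euc d, ‖f x - g x‖) < ε ∧
        (HomotopicToId ⇑f → HomotopicToId ⇑g) :=
  c0_closing_lemma_general d K f hsupp x₀ hnw
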